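/- Let α : A⁺ → S be a morphism to a finite semigroup S. In any word w ∈ A⁺, among any |S| + 1 consecutive positions, at least one is distinguished, where a position x is distinguished if α(u_x)·e = α(u_x) for some idempotent e, with u_x the infix of length at most |S| of w ending at x. -/

import Mathlib

/-- The value of a nonempty word under the letter map `α : A → S`,
`none` on the empty word. -/
def evalWord? {A S : Type*} [Semigroup S] (α : A → S) : List A → Option S
  | [] => none
  | a :: r => some (r.foldl (fun acc b => acc * α b) (α a))

/-- `windowAt c w x` is the infix of `w` consisting of positions
`max(0, x − c + 1)` through `x` (0-indexed), i.e. the factor of length at most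
`c` of `w` ending at position `x`. -/
def windowAt {A : Type*} (c : ℕ) (w : List A) (x : ℕ) : List A :=
  (w.take (x + 1)).drop (x + 1 - c)

/-- Position `x` of `w` is distinguished if `α(u_x)·e = α(u_x)` for some
idempotent `e`, where `u_x` is the factor of length at most `c = |S|` of `w`
ending at `x`. -/
def Distinguished {A S : Type*} [Semigroup S] (c : ℕ) (α : A → S)
    (w : List A) (x : ℕ) : Prop :=
  ∃ e v : S, e * e = e ∧ evalWord? α (windowAt c w x) = some v ∧ v * e = v

/-!
Let `u` be the suffix of `w` starting at position `x`. Two of its `|S| + 1` shortest nonempty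
prefixes have the same value, `α(v) = α(v m)` with `m` nonempty, so `α(v)` is fixed by right
multiplication by `α(m)`, hence by some idempotent of the finite subsemigroup
`{s | α(v) s = α(v)}`. Extending `v` to the left to the window ending at its last position
preserves this.
-/

section EvalWord

variable {A S : Type*} [Semigroup S] (α : A → S)

lemma foldl_mul_eq_mul_foldl (r : List A) (s t : S) :
    r.foldl (fun acc b => acc * α b) (s * t) = s * r.foldl (fun acc b => acc * α b) t := by
  induction r generalizing t with
  | nil => rfl
  | cons b r ih => rw [List.foldl_cons, List.foldl_cons, mul_assoc, ih]

variable {α}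

lemma evalWord?_append {l₁ l₂ : List A} {s t : S} (h₁ : evalWord? α l₁ = some s)
    (h₂ : evalWord? α l₂ = some t) : evalWord? α (l₁ ++ l₂) = some (s * t) := by
  match l₁, l₂, h₁, h₂ with
  | a :: r, b :: r', h₁, h₂ =>
    simp only [evalWord?, Option.some.injEq] at h₁ h₂
    subst h₁ h₂
    simp only [List.cons_append, evalWord?, List.foldl_append, List.foldl_cons,
      foldl_mul_eq_mul_foldl]

lemma exists_evalWord?_eq_some {l : List A} (hl : l ≠ []) : ∃ s, evalWord? α l = some s := by
  obtain ⟨a, r, rfl⟩ := List.exists_cons_of_ne_nil hl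
  exact ⟨_, rfl⟩

lemma exists_evalWord?_append_mul_eq_self (p : List A) {v : List A} {t e : S}
    (hv : evalWord? α v = some t) (he : t * e = t) :
    ∃ s, evalWord? α (p ++ v) = some s ∧ s * e = s := by
  rcases eq_or_ne p [] with rfl | hp
  · exact ⟨t, hv, he⟩
  · obtain ⟨s, hs⟩ := exists_evalWord?_eq_some (α := α) hp
    exact ⟨s * t, evalWord?_append hs hv, by rw [mul_assoc, he]⟩

end EvalWord

/-- Ellis' lemma for the subsemigroup `{s | t * s = t}`, with the discrete topology on `S`. -/
lemma exists_idempotent_mul_eq_self {S : Type*} [Semigroup S] [Finite S] {t q : S}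
    (h : t * q = t) : ∃ e, e * e = e ∧ t * e = t := by
  let _ : TopologicalSpace S := ⊥
  have : DiscreteTopology S := ⟨rfl⟩
  obtain ⟨e, he, hee⟩ := exists_idempotent_in_compact_subsemigroup
    (fun _ => continuous_of_discreteTopology) ({s | t * s = t} : Set S) ⟨q, h⟩
    (Set.toFinite _).isCompact
    (fun x hx y hy => by simp only [Set.mem_ofPred_eq] at *; rw [← mul_assoc, hx, hy])
  exact ⟨e, hee, he⟩

lemma windowAt_add_of_lt {A : Type*} (c : ℕ) (w : List A) (x : ℕ) {i : ℕ} (hi : i < c) :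
    windowAt c w (x + i) = (w.take x).drop (x + i + 1 - c) ++ (w.drop x).take (i + 1) := by
  rw [windowAt, Nat.add_assoc x i 1, List.take_add, List.drop_append, List.length_take]
  rcases le_or_gt x w.length with hx | hx
  · rw [min_eq_left hx, show x + (i + 1) - c - x = 0 by omega, List.drop_zero]
  · simp [List.drop_eq_nil_of_le hx.le]

lemma exists_prefix_fixed_by_idempotent {A S : Type*} [Semigroup S] [Fintype S] (α : A → S)
    (u : List A) (hu : Fintype.card S < u.length) :
    ∃ i < Fintype.card S, ∃ e t : S,
      e * e = e ∧ evalWord? α (u.take (i + 1)) = some t ∧ t * e = t := by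
  have hprefix : ∀ k, ∃ t, evalWord? α (u.take (k + 1)) = some t := fun k =>
    exists_evalWord?_eq_some (List.ne_nil_of_length_pos (by rw [List.length_take]; omega))
  obtain ⟨i, hi, j, hj, hne, heq⟩ := Finset.exists_ne_map_eq_of_card_lt_of_maps_to
    (s := Finset.range (Fintype.card S + 1)) (t := Finset.univ.map .some)
    (f := fun k => evalWord? α (u.take (k + 1))) (by simp)
    (fun k _ => by obtain ⟨t, ht⟩ := hprefix k; simp [ht])
  rw [Finset.mem_range] at hi hj
  wlog hij : i < j generalizing i j
  · exact this j hj i hi hne.symm heq.symm (by omega)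
  obtain ⟨t, ht⟩ := hprefix i
  obtain ⟨q, hq⟩ := exists_evalWord?_eq_some (α := α)
    (l := (u.drop (i + 1)).take (j - i))
    (List.ne_nil_of_length_pos (by rw [List.length_take, List.length_drop]; omega))
  have hsplit : u.take (j + 1) = u.take (i + 1) ++ (u.drop (i + 1)).take (j - i) := by
    rw [← List.take_add]
    congr 1
    omega
  have htq : t * q = t := by
    simpa only [hsplit, evalWord?_append ht hq, ht, Option.some.injEq] using heq.symm
  obtain ⟨e, he, hte⟩ := exists_idempotent_mul_eq_self htq
  exact ⟨i, by omega, e, t, he, ht, hte⟩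

/-- In any word over a finite semigroup morphism, among any `|S| + 1`
consecutive positions at least one is distinguished. -/
theorem stmt16 (A S : Type*) [Semigroup S] [Fintype S] (α : A → S)
    (w : List A) (x : ℕ) (h : x + Fintype.card S < w.length) :
    ∃ y, x ≤ y ∧ y ≤ x + Fintype.card S ∧
      Distinguished (Fintype.card S) α w y := by
  obtain ⟨i, hi, e, t, he, ht, hte⟩ :=
    exists_prefix_fixed_by_idempotent α (w.drop x) (by rw [List.length_drop]; omega)
  obtain ⟨s, hs, hse⟩ :=
    exists_evalWord?_append_mul_eq_self ((w.take x).drop (x + i + 1 - Fintype.card S)) ht hte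
  exact ⟨x + i, by omega, by omega, e, s, he, by rwa [windowAt_add_of_lt _ _ _ hi], hse⟩
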